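/- arXiv:2409.20004 — 3 statements merged into one kernel-verified Lean document; each statement's English description precedes it below -/
import Mathlib

section
/- The fixed-point smoother recursion of Algorithm 2 coincides with the classical fixed-point recursion: suppose for each k the quantities satisfy G_{0|k} = G_{0|k-1} G_{k-1|k}, p_{0|k} = G_{0|k-1} p_{k-1|k} + p_{0|k-1}, P_{0|k} = G_{0|k-1} P_{k-1|k} G_{0|k-1}ᵀ + P_{0|k-1}, with G_{0|0} = I, p_{0|0} = 0, P_{0|0} = 0, where the smoother conditionals satisfy p_{k-1|k} = m_{k-1|k-1} − G_{k-1|k} m_{k|k-1} and P_{k-1|k} = C_{k-1|k-1} − G_{k-1|k} C_{k|k-1} G_{k-1|k}ᵀ. Define m_{0|k} := G_{0|k} m_{k|k} + p_{0|k} and C_{0|k} := G_{0|k} C_{k|k} G_{0|k}ᵀ + P_{0|k}, with m_{0|0} = m and C_{0|0} = C given. Then for all k ≥ 1: m_{0|k} = m_{0|k-1} + G_{0|k}(m_{k|k} − m_{k|k-1}) and C_{0|k} = C_{0|k-1} + G_{0|k}(C_{k|k} − C_{k|k-1}) G_{0|k}ᵀ. -/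
open Matrix

/-- Proposition 1: the fixed-point smoother recursion of Algorithm 2 coincides with
the classical fixed-point recursion. `mf`/`Cf` are the filtered means/covariances
`m_{k|k}`/`C_{k|k}`; `mp`/`Cp` are the predicted means/covariances `m_{k|k-1}`/`C_{k|k-1}`
(indexed so that `mp (k+1) = m_{k+1|k}`); `Gs (k+1) = G_{k|k+1}` are the smoothing gains
with offsets `ps`/`Ps`; `G0 k = G_{0|k}`, `p0 k = p_{0|k}`, `P0 k = P_{0|k}`. -/
theorem stmt_3 {D : ℕ}
    (mf mp : ℕ → (Fin D → ℝ))
    (Cf Cp : ℕ → Matrix (Fin D) (Fin D) ℝ)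
    (Gs : ℕ → Matrix (Fin D) (Fin D) ℝ)
    (ps : ℕ → (Fin D → ℝ)) (Ps : ℕ → Matrix (Fin D) (Fin D) ℝ)
    (G0 : ℕ → Matrix (Fin D) (Fin D) ℝ)
    (p0 : ℕ → (Fin D → ℝ)) (P0 : ℕ → Matrix (Fin D) (Fin D) ℝ)
    -- initialisation of the fixed-point conditional
    (hG00 : G0 0 = 1) (hp00 : p0 0 = 0) (hP00 : P0 0 = 0)
    -- Algorithm 2 recursion
    (hG0 : ∀ k : ℕ, G0 (k + 1) = G0 k * Gs (k + 1))
    (hp0 : ∀ k : ℕ, p0 (k + 1) = (G0 k).mulVec (ps (k + 1)) + p0 k)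
    (hP0 : ∀ k : ℕ, P0 (k + 1) = G0 k * Ps (k + 1) * (G0 k)ᵀ + P0 k)
    -- smoothing conditionals from the Rauch--Tung--Striebel smoother
    (hps : ∀ k : ℕ, ps (k + 1) = mf k - (Gs (k + 1)).mulVec (mp (k + 1)))
    (hPs : ∀ k : ℕ, Ps (k + 1) = Cf k - Gs (k + 1) * Cp (k + 1) * (Gs (k + 1))ᵀ)
    -- marginal parametrisation m_{0|k}, C_{0|k}
    (m0 : ℕ → (Fin D → ℝ)) (C0 : ℕ → Matrix (Fin D) (Fin D) ℝ)
    (hm0 : ∀ k : ℕ, m0 k = (G0 k).mulVec (mf k) + p0 k)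
    (hC0 : ∀ k : ℕ, C0 k = G0 k * Cf k * (G0 k)ᵀ + P0 k) :
    ∀ k : ℕ,
      m0 (k + 1) = m0 k + (G0 (k + 1)).mulVec (mf (k + 1) - mp (k + 1)) ∧
      C0 (k + 1) = C0 k + G0 (k + 1) * (Cf (k + 1) - Cp (k + 1)) * (G0 (k + 1))ᵀ := by
  intro k
  constructor
  · simp only [hm0, hG0, hp0, hps]
    simp [Matrix.mulVec_sub, Matrix.mulVec_add, Matrix.mulVec_mulVec]
    abel
  · simp only [hC0, hG0, hP0, hPs, Matrix.transpose_mul]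
    noncomm_ring
end

section
/- Kalman gain from QR factors: under the setup of the block QR identity (R1ᵀ R1 = S := H C Hᵀ + R_obs and R1ᵀ R2 = H C, with R1 invertible), the matrix Z := (R1⁻¹ R2)ᵀ satisfies Z = C Hᵀ S⁻¹, and furthermore R3ᵀ R3 = C − Z S Zᵀ when additionally Q [[R1,R2],[0,R3]] = [[L_Rᵀ,0],[L_Cᵀ Hᵀ, L_Cᵀ]] holds with Qᵀ Q = I. -/
open Matrix

theorem stmt_10 {d D : ℕ}
    (Robs : Matrix (Fin d) (Fin d) ℝ) (C : Matrix (Fin D) (Fin D) ℝ)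
    (LR : Matrix (Fin d) (Fin d) ℝ) (LC : Matrix (Fin D) (Fin D) ℝ)
    (H : Matrix (Fin d) (Fin D) ℝ)
    (hRobs : Robs.PosSemidef) (hC : C.PosSemidef)
    (hLR : Robs = LR * LRᵀ) (hLC : C = LC * LCᵀ)
    (S : Matrix (Fin d) (Fin d) ℝ) (hS : S = H * C * Hᵀ + Robs)
    (hSinv : IsUnit S)
    (Q : Matrix (Fin d ⊕ Fin D) (Fin d ⊕ Fin D) ℝ)
    (R1 : Matrix (Fin d) (Fin d) ℝ) (R2 : Matrix (Fin d) (Fin D) ℝ)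
    (R3 : Matrix (Fin D) (Fin D) ℝ)
    (hR1tri : R1.BlockTriangular id) (hR3tri : R3.BlockTriangular id)
    (hR1inv : IsUnit R1)
    (hSfac : R1ᵀ * R1 = S) (hHC : R1ᵀ * R2 = H * C)
    (hQ : Qᵀ * Q = 1)
    (hQR : Q * Matrix.fromBlocks R1 R2 0 R3 = Matrix.fromBlocks LRᵀ 0 (LCᵀ * Hᵀ) LCᵀ)
    (Z : Matrix (Fin D) (Fin d) ℝ) (hZ : Z = (R1⁻¹ * R2)ᵀ) :
    Z = C * Hᵀ * S⁻¹ ∧ R3ᵀ * R3 = C - Z * S * Zᵀ := by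

  have hdet : IsUnit R1.det := (Matrix.isUnit_iff_isUnit_det R1).mp hR1inv
  have hinv' : R1 * R1⁻¹ = 1 := Matrix.mul_nonsing_inv R1 hdet
  have hTdet : IsUnit (R1ᵀ).det := by rwa [Matrix.det_transpose]
  have hTinv : (R1ᵀ)⁻¹ * R1ᵀ = 1 := Matrix.nonsing_inv_mul _ hTdet
  have hZ' : Z = R2ᵀ * (R1ᵀ)⁻¹ := by
    rw [hZ, Matrix.transpose_mul, Matrix.transpose_nonsing_inv]
  have hCH : C * Hᵀ = R2ᵀ * R1 := by
    have h := congrArg Matrix.transpose hHC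
    have hCt : Cᵀ = C := by rw [hLC]; simp [Matrix.transpose_mul]
    simpa [Matrix.transpose_mul, hCt, Matrix.mul_assoc] using h.symm
  have h1 : Z = C * Hᵀ * S⁻¹ := by
    rw [hZ', hCH, ← hSfac, Matrix.mul_inv_rev, ← Matrix.mul_assoc, Matrix.mul_assoc (R2ᵀ) R1 R1⁻¹, hinv', Matrix.mul_one]
  refine ⟨h1, ?_⟩
  have hblock : R2ᵀ * R2 + R3ᵀ * R3 = C := by
    have h := congrArg (fun M => Mᵀ * M) hQR
    simp only [Matrix.transpose_mul, Matrix.mul_assoc] at h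
    rw [← Matrix.mul_assoc Qᵀ Q, hQ, Matrix.one_mul] at h
    have h2 := congrArg Matrix.toBlocks₂₂ h
    simpa [Matrix.fromBlocks_transpose, Matrix.fromBlocks_multiply, hLC] using h2
  have hZSZ : Z * S * Zᵀ = R2ᵀ * R2 := by
    have ht : (R2ᵀ * (R1ᵀ)⁻¹)ᵀ = R1⁻¹ * R2 := by
      rw [Matrix.transpose_mul, Matrix.transpose_nonsing_inv, Matrix.transpose_transpose,
        Matrix.transpose_transpose]
    rw [hZ', ← hSfac, ht]
    simp only [Matrix.mul_assoc]
    rw [← Matrix.mul_assoc R1 R1⁻¹ R2, hinv', Matrix.one_mul,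
      ← Matrix.mul_assoc (R1ᵀ)⁻¹ R1ᵀ R2, hTinv, Matrix.one_mul]
  rw [hZSZ, ← hblock]; abel
end

section
/- Kalman update covariance equivalence: if S = H C Hᵀ + R is invertible and Z = C Hᵀ S⁻¹, then C − Z S Zᵀ = C − C Hᵀ S⁻¹ H C, and this matrix is symmetric; moreover, if C ⪰ 0 and R ⪰ 0 then C − C Hᵀ S⁻¹ H C ⪰ 0. -/
/-!
With the gain `K = C Hᵀ S⁻¹`, symmetry of `C` and `S` gives `Kᵀ = S⁻¹ H C`, so `K S Kᵀ = K H C`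
and the symmetry of `C - K H C` are direct computations. Positivity comes from the Joseph form
`C - K H C = (1 - K H) C (1 - K H)ᵀ + K R Kᵀ`, a sum of congruences of the positive semidefinite
`C` and `R`.
-/

open Matrix

namespace Matrix

variable {m n α : Type*} [Fintype m] [DecidableEq m] [Fintype n] [CommRing α]

omit [Fintype m] [DecidableEq m] in
theorem IsSymm.mul_mul_transpose {A : Matrix n n α} (hA : A.IsSymm) (B : Matrix m n α) :
    (B * A * Bᵀ).IsSymm := by
  rw [IsSymm, transpose_mul, transpose_mul, transpose_transpose, hA.eq, Matrix.mul_assoc]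

omit [Fintype n] in
theorem IsSymm.nonsing_inv {A : Matrix m m α} (hA : A.IsSymm) : A⁻¹.IsSymm := by
  rw [IsSymm, transpose_nonsing_inv, hA.eq]

variable {C : Matrix n n α} {H : Matrix m n α} {S : Matrix m m α}

theorem transpose_mul_transpose_mul_nonsing_inv (hC : C.IsSymm) (hS : S.IsSymm) :
    (C * Hᵀ * S⁻¹)ᵀ = S⁻¹ * H * C := by
  rw [transpose_mul, transpose_mul, hS.nonsing_inv.eq, transpose_transpose, hC.eq,
    Matrix.mul_assoc]

theorem isSymm_sub_mul_transpose_mul_nonsing_inv_mul (hC : C.IsSymm) (hS : S.IsSymm) :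
    (C - C * Hᵀ * S⁻¹ * H * C).IsSymm := by
  refine hC.sub ?_
  have := hS.nonsing_inv.mul_mul_transpose (C * Hᵀ)
  rw [transpose_mul, transpose_transpose, hC.eq] at this
  simpa only [Matrix.mul_assoc] using this

theorem kalman_gain_mul_mul_transpose (hC : C.IsSymm) (hS : S.IsSymm) (hSu : IsUnit S) :
    C * Hᵀ * S⁻¹ * S * (C * Hᵀ * S⁻¹)ᵀ = C * Hᵀ * S⁻¹ * H * C := by
  rw [nonsing_inv_mul_cancel_right S (C * Hᵀ) ((isUnit_iff_isUnit_det S).mp hSu),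
    transpose_mul_transpose_mul_nonsing_inv hC hS]
  simp only [Matrix.mul_assoc]

theorem kalman_joseph_form [DecidableEq n] {R : Matrix m m α} (hC : C.IsSymm) (hR : R.IsSymm)
    (hS : S = H * C * Hᵀ + R) (hSu : IsUnit S) :
    (1 - C * Hᵀ * S⁻¹ * H) * C * (1 - C * Hᵀ * S⁻¹ * H)ᵀ + C * Hᵀ * S⁻¹ * R * (C * Hᵀ * S⁻¹)ᵀ
      = C - C * Hᵀ * S⁻¹ * H * C := by
  have hSsym : S.IsSymm := hS ▸ (hC.mul_mul_transpose H).add hR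
  have hdet : IsUnit S.det := (isUnit_iff_isUnit_det S).mp hSu
  set K := C * Hᵀ * S⁻¹
  have hKt : Kᵀ = S⁻¹ * H * C := transpose_mul_transpose_mul_nonsing_inv hC hSsym
  calc (1 - K * H) * C * (1 - K * H)ᵀ + K * R * Kᵀ
      = C - K * H * C - C * Hᵀ * Kᵀ + K * (H * C * Hᵀ + R) * Kᵀ := by
        rw [transpose_sub, transpose_one, transpose_mul]
        simp only [Matrix.sub_mul, Matrix.mul_sub, Matrix.mul_add, Matrix.add_mul, Matrix.mul_one,
          Matrix.one_mul, Matrix.mul_assoc]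
        abel
    _ = C - K * H * C := by
        rw [← hS, hKt]
        simp only [K, Matrix.mul_assoc, nonsing_inv_mul_cancel_left S _ hdet]
        abel

theorem PosSemidef.sub_mul_transpose_mul_nonsing_inv_mul [DecidableEq n] {C : Matrix n n ℝ}
    {H : Matrix m n ℝ} {R S : Matrix m m ℝ} (hC : C.PosSemidef) (hR : R.PosSemidef) (hS : S = H * C * Hᵀ + R)
    (hSu : IsUnit S) : (C - C * Hᵀ * S⁻¹ * H * C).PosSemidef := by
  have hCsym : C.IsSymm := by simpa [IsSymm] using hC.isHermitian.eq
  have hRsym : R.IsSymm := by simpa [IsSymm] using hR.isHermitian.eq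
  rw [← kalman_joseph_form hCsym hRsym hS hSu]
  simpa only [conjTranspose_eq_transpose_of_trivial] using
    (hC.mul_mul_conjTranspose_same _).add (hR.mul_mul_conjTranspose_same (C * Hᵀ * S⁻¹))

end Matrix

theorem stmt_11 {d D : ℕ}
    (C : Matrix (Fin D) (Fin D) ℝ) (R : Matrix (Fin d) (Fin d) ℝ)
    (H : Matrix (Fin d) (Fin D) ℝ)
    (S : Matrix (Fin d) (Fin d) ℝ) (hS : S = H * C * Hᵀ + R)
    (hSinv : IsUnit S)
    (Z : Matrix (Fin D) (Fin d) ℝ) (hZ : Z = C * Hᵀ * S⁻¹)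
    (hCsym : C.IsSymm) (hRsym : R.IsSymm) :
    (C - Z * S * Zᵀ = C - C * Hᵀ * S⁻¹ * H * C) ∧
    (C - C * Hᵀ * S⁻¹ * H * C).IsSymm ∧
    (C.PosSemidef → R.PosSemidef → (C - C * Hᵀ * S⁻¹ * H * C).PosSemidef) := by
  have hSsym : S.IsSymm := hS ▸ (hCsym.mul_mul_transpose H).add hRsym
  refine ⟨?_, isSymm_sub_mul_transpose_mul_nonsing_inv_mul hCsym hSsym,
    fun hC hR => hC.sub_mul_transpose_mul_nonsing_inv_mul hR hS hSinv⟩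
  rw [hZ, kalman_gain_mul_mul_transpose hCsym hSsym hSinv]
end
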